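/- Suppose a root sequence of length k evolves down a tree of depth H = O(log n), where on each edge each site is independently inserted-next-to or deleted with total probability p_id ≤ α/(4·d·k^{2/3}·a) with a ≥ C·log n. Then for any ζ > 0 there is C' > 0 such that if k ≥ C'·log³n, with probability 1 - 1/poly(n) every node's sequence length lies in [(1-ζ)k, (1+ζ)k]. -/

import Mathlib

/-!
Let `z = min ζ 1` and `T = ⌊z k / (2H)⌋`. As long as every edge changes the length by at most
`T`, all lengths stay within `z k / 2` of `k`, hence in the required window. At a node of length
`m ≤ 3k/2` the numbers of deletions and insertions are `Bin(m, p)` with `6 m p ≤ T + 1` (this is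
where `a ≥ C log n` enters), so Markov's inequality for `2 ^ X` bounds the probability that either
exceeds `T` by `2 (3/5)^(T+1)`. A union bound over the fewer than `2n` non-root nodes leaves a
failure probability of at most `4 n (3/5)^(T+1) ≤ n^(-D)`, since `T ≳ k / log n ≳ log² n`.
-/

/-- Length of a child sequence given a parent sequence of length m: each of the m sites
is independently deleted with probability p_d and has a new site inserted next to it
with probability p_i, so the child length is m - Bin(m,p_d) + Bin(m,p_i). -/
noncomputable def childLenPMF (pins pdel : ℝ) (m : ℕ) : PMF ℕ :=
  (PMF.binomial (min (Real.toNNReal pdel) 1) (min_le_right _ _) m).bind fun del =>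
    (PMF.binomial (min (Real.toNNReal pins) 1) (min_le_right _ _) m).map fun ins =>
      m - (del : ℕ) + (ins : ℕ)

/-- Whether all of `c` independent children (of a node whose sequence has length m),
together with their descendant subtrees of height `hgt`, have all sequence lengths
satisfying the predicate `good`; `f m'` is the corresponding event for a single child
subtree whose root sequence has length m'. -/
noncomputable def childrenGood (pins pdel : ℝ) (f : ℕ → PMF Bool) (m : ℕ) : ℕ → PMF Bool
  | 0 => PMF.pure true
  | c + 1 =>
      (childLenPMF pins pdel m).bind fun m' =>
        (f m').bind fun b => (childrenGood pins pdel f m c).map fun b2 => b && b2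

/-- `allGood pins pdel good d hgt m` is the probability distribution of the event that
in the d-ary tree of height `hgt` whose root sequence has length m, every node's
sequence length satisfies `good`. -/
noncomputable def allGood (pins pdel : ℝ) (good : ℕ → Bool) (d : ℕ) : ℕ → ℕ → PMF Bool
  | 0, m => PMF.pure (good m)
  | hgt + 1, m =>
      if good m then childrenGood pins pdel (fun m' => allGood pins pdel good d hgt m') m d
      else PMF.pure false

open scoped ENNReal NNReal
open Finset

lemma sum_binomial_tail_le {p : ℝ} (h0 : 0 ≤ p) (h1 : p ≤ 1) {m s : ℕ} (hs : 6 * m * p ≤ s) :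
    ∑ i ∈ range (m + 1), (if s ≤ i then p ^ i * (1 - p) ^ (m - i) * m.choose i else 0)
      ≤ (3 / 5 : ℝ) ^ s := by
  -- Markov's inequality for `2 ^ X`, whose mean is `(1 + p) ^ m ≤ exp (m p)`
  have hterm : ∀ i ∈ range (m + 1),
      (if s ≤ i then p ^ i * (1 - p) ^ (m - i) * m.choose i else 0)
        ≤ (1 / 2 : ℝ) ^ s * ((2 * p) ^ i * (1 - p) ^ (m - i) * m.choose i) := by
    intro i _
    have h1p : 0 ≤ 1 - p := by linarith
    split_ifs with hsi
    · have hpi : p ^ i ≤ (1 / 2 : ℝ) ^ s * (2 * p) ^ i :=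
        calc p ^ i = (1 / 2 : ℝ) ^ i * (2 * p) ^ i := by rw [← mul_pow]; ring
          _ ≤ (1 / 2 : ℝ) ^ s * (2 * p) ^ i := by
            gcongr ?_ * _
            exact pow_le_pow_of_le_one (by norm_num) (by norm_num) hsi
      calc p ^ i * (1 - p) ^ (m - i) * m.choose i
          ≤ (1 / 2 : ℝ) ^ s * (2 * p) ^ i * (1 - p) ^ (m - i) * m.choose i := by gcongr
        _ = _ := by ring
    · positivity
  calc _ ≤ ∑ i ∈ range (m + 1), (1 / 2 : ℝ) ^ s * ((2 * p) ^ i * (1 - p) ^ (m - i) * m.choose i) :=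
        sum_le_sum hterm
    _ = (1 / 2 : ℝ) ^ s * (1 + p) ^ m := by rw [← mul_sum, ← add_pow]; ring_nf
    _ ≤ (1 / 2 : ℝ) ^ s * Real.exp (1 / 6) ^ s := by
        gcongr
        calc (1 + p) ^ m ≤ Real.exp p ^ m := by gcongr; linarith [Real.add_one_le_exp p]
          _ = Real.exp (m * p) := (Real.exp_nat_mul p m).symm
          _ ≤ Real.exp (s * (1 / 6)) := Real.exp_le_exp.2 (by linarith)
          _ = Real.exp (1 / 6) ^ s := Real.exp_nat_mul _ s
    _ ≤ (1 / 2 : ℝ) ^ s * (6 / 5) ^ s := by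
        gcongr
        calc Real.exp (1 / 6) ≤ 1 / (1 - 1 / 6) :=
              Real.exp_bound_div_one_sub_of_interval (by norm_num) (by norm_num)
          _ = 6 / 5 := by norm_num
    _ = (3 / 5 : ℝ) ^ s := by rw [← mul_pow]; norm_num

namespace PMF

lemma binomial_tail_le {p : ℝ≥0} (h : p ≤ 1) {m s : ℕ} (hs : 6 * m * (p : ℝ) ≤ s) :
    ∑ i : Fin (m + 1) with s ≤ i.val, binomial p h m i ≤ ((3 / 5 : ℝ≥0) ^ s : ℝ≥0∞) := by
  have hreal := sum_binomial_tail_le p.coe_nonneg (by exact_mod_cast h) hs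
  rw [← Fin.sum_univ_eq_sum_range
    (fun i => if s ≤ i then (p : ℝ) ^ i * (1 - p) ^ (m - i) * m.choose i else 0),
    ← sum_filter] at hreal
  simp only [binomial_apply, Fin.val_last]
  norm_cast
  rw [← NNReal.coe_le_coe]
  push_cast [NNReal.coe_sub h]
  exact hreal

lemma binomial_tsum_mul_le {p : ℝ≥0} (h : p ≤ 1) {m s : ℕ} (hs : 6 * m * (p : ℝ) ≤ s)
    {B : ℝ≥0∞} {g : Fin (m + 1) → ℝ≥0∞} (hg : ∀ i, g i ≤ 1)
    (hgB : ∀ i : Fin (m + 1), (i : ℕ) < s → g i ≤ B) :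
    ∑' i, binomial p h m i * g i ≤ ((3 / 5 : ℝ≥0) ^ s : ℝ≥0∞) + B := by
  set q := binomial p h m
  have hsplit : ∀ i, q i * g i ≤ (if s ≤ (i : ℕ) then q i else 0) + q i * B := by
    intro i
    split_ifs with hsi
    · exact le_add_right (mul_le_of_le_one_right' (hg i))
    · exact le_add_left (mul_le_mul_right (hgB i (not_le.1 hsi)) _)
  calc ∑' i, q i * g i
      ≤ ∑ i : Fin (m + 1), ((if s ≤ (i : ℕ) then q i else 0) + q i * B) := by
        rw [tsum_fintype]; exact sum_le_sum fun i _ => hsplit i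
    _ = (∑ i : Fin (m + 1), if s ≤ (i : ℕ) then q i else 0) + (∑' i, q i) * B := by
        rw [sum_add_distrib, ← sum_mul, tsum_fintype]
    _ ≤ _ := by rw [q.tsum_coe, one_mul, ← sum_filter]; gcongr; exact binomial_tail_le h hs

lemma bind_map_and_apply_false_le (P r : PMF Bool) :
    (P.bind fun b => r.map fun b₂ => b && b₂) false ≤ P false + r false := by
  rw [bind_apply, tsum_bool]
  gcongr
  · exact mul_le_of_le_one_right' (coe_le_one _ _)
  · rw [show (fun b₂ => true && b₂) = id from funext Bool.true_and, map_id]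
    exact mul_le_of_le_one_left' (coe_le_one _ _)

lemma one_sub_le_toReal_apply_true {P : PMF Bool} {x : ℝ} (h : (P false).toReal ≤ x) :
    1 - x ≤ (P true).toReal := by
  have hsum : (P false).toReal + (P true).toReal = 1 := by
    rw [← ENNReal.toReal_add (P.apply_ne_top _) (P.apply_ne_top _), ← tsum_bool, P.tsum_coe,
      ENNReal.toReal_one]
  linarith

end PMF

lemma childrenGood_apply_false_le (pins pdel : ℝ) (f : ℕ → PMF Bool) (m c : ℕ) :
    childrenGood pins pdel f m c false ≤ c * (childLenPMF pins pdel m).bind f false := by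
  induction c with
  | zero => simp [childrenGood]
  | succ c ih =>
    rw [childrenGood, ← PMF.bind_bind]
    calc _ ≤ (childLenPMF pins pdel m).bind f false + childrenGood pins pdel f m c false :=
          PMF.bind_map_and_apply_false_le _ _
      _ ≤ (childLenPMF pins pdel m).bind f false + c * (childLenPMF pins pdel m).bind f false := by
          gcongr
      _ = _ := by push_cast; ring

lemma childLenPMF_bind (pins pdel : ℝ) (m : ℕ) (f : ℕ → PMF Bool) :
    (childLenPMF pins pdel m).bind f
      = (PMF.binomial (min pdel.toNNReal 1) (min_le_right _ _) m).bind fun del =>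
          (PMF.binomial (min pins.toNNReal 1) (min_le_right _ _) m).bind fun ins =>
            f (m - del + ins) := by
  simp only [childLenPMF, PMF.map, bind, pure, PMF.bind_bind, PMF.pure_bind, Function.comp_def]

lemma childLenPMF_bind_apply_false_le {pins pdel : ℝ} (hi : 0 ≤ pins) (hd : 0 ≤ pdel) {m T : ℕ}
    (hm : 6 * m * (pins + pdel) ≤ T + 1) {f : ℕ → PMF Bool} {B : ℝ≥0∞}
    (hf : ∀ m' : ℕ, |(m' : ℝ) - m| ≤ T → f m' false ≤ B) :
    (childLenPMF pins pdel m).bind f false ≤ 2 * ((3 / 5 : ℝ≥0) ^ (T + 1) : ℝ≥0∞) + B := by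
  have hclamp : ∀ {p : ℝ}, 0 ≤ p → p ≤ pins + pdel →
      6 * m * ((min p.toNNReal 1 : ℝ≥0) : ℝ) ≤ ((T + 1 : ℕ) : ℝ) := fun hp hpid => by
    push_cast
    refine le_trans ?_ hm
    gcongr
    exact min_le_of_left_le ((Real.coe_toNNReal _ hp).trans_le hpid)
  rw [childLenPMF_bind, PMF.bind_apply]
  calc _ ≤ ((3 / 5 : ℝ≥0) ^ (T + 1) : ℝ≥0∞) + (((3 / 5 : ℝ≥0) ^ (T + 1) : ℝ≥0∞) + B) := by
        refine PMF.binomial_tsum_mul_le _ (hclamp hd (by linarith)) (fun _ => PMF.coe_le_one _ _) ?_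
        intro del hdel
        refine PMF.binomial_tsum_mul_le _ (hclamp hi (by linarith)) (fun _ => PMF.coe_le_one _ _) ?_
        intro ins hins
        apply hf
        have hdm : (del : ℕ) ≤ m := Nat.lt_succ_iff.1 del.isLt
        have hdT : ((del : ℕ) : ℝ) ≤ T := by exact_mod_cast Nat.lt_succ_iff.1 hdel
        have hiT : ((ins : ℕ) : ℝ) ≤ T := by exact_mod_cast Nat.lt_succ_iff.1 hins
        push_cast [Nat.cast_sub hdm]
        rw [abs_le]
        constructor <;> linarith [Nat.cast_nonneg (α := ℝ) (del : ℕ)]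
    _ = _ := by rw [← add_assoc, two_mul]

def nonRootCount (d : ℕ) : ℕ → ℕ
  | 0 => 0
  | h + 1 => d * (nonRootCount d h + 1)

lemma nonRootCount_add_two_le {d : ℕ} (hd : 2 ≤ d) (h : ℕ) : nonRootCount d h + 2 ≤ 2 * d ^ h := by
  induction h with
  | zero => simp [nonRootCount]
  | succ h ih =>
    have : d * (nonRootCount d h + 2) ≤ d * (2 * d ^ h) := Nat.mul_le_mul_left d ih
    simp only [nonRootCount, pow_succ]
    nlinarith

/-- Union bound over the nodes below the root: a node inside the window `[c - R, c + R]` has a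
child whose length differs from its own by more than `T` with probability at most
`2 (3/5)^(T+1)`, and otherwise the nodes at depth `j` stay within `j T` of the root. -/
lemma allGood_apply_false_le {pins pdel : ℝ} (hi : 0 ≤ pins) (hd : 0 ≤ pdel) {good : ℕ → Bool}
    {d T : ℕ} {c R : ℝ}
    (hwin : ∀ m : ℕ, |(m : ℝ) - c| ≤ R → good m = true ∧ 6 * m * (pins + pdel) ≤ T + 1)
    (hgt m : ℕ) (hm : |(m : ℝ) - c| + hgt * T ≤ R) :
    allGood pins pdel good d hgt m false
      ≤ nonRootCount d hgt * (2 * ((3 / 5 : ℝ≥0) ^ (T + 1) : ℝ≥0∞)) := by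
  induction hgt generalizing m with
  | zero => simp [allGood, (hwin m (by simpa using hm)).1]
  | succ hgt ih =>
    have hTnn : (0 : ℝ) ≤ (hgt + 1 : ℕ) * T := by positivity
    obtain ⟨hgood, hrate⟩ := hwin m (by linarith)
    set ε : ℝ≥0∞ := 2 * ((3 / 5 : ℝ≥0) ^ (T + 1) : ℝ≥0∞)
    have hchild : ∀ m' : ℕ, |(m' : ℝ) - m| ≤ T →
        allGood pins pdel good d hgt m' false ≤ nonRootCount d hgt * ε := fun m' hm' =>
      ih m' (by push_cast at hm; linarith [abs_sub_le (m' : ℝ) m c])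
    calc allGood pins pdel good d (hgt + 1) m false
        ≤ d * (childLenPMF pins pdel m).bind (allGood pins pdel good d hgt) false := by
          rw [allGood, if_pos hgood]; exact childrenGood_apply_false_le _ _ _ _ _
      _ ≤ d * (ε + nonRootCount d hgt * ε) := by
          gcongr; exact childLenPMF_bind_apply_false_le hi hd hrate hchild
      _ = nonRootCount d (hgt + 1) * ε := by rw [nonRootCount]; push_cast; ring

lemma natCast_le_log_pow {d : ℕ} (hd : 3 ≤ d) (H : ℕ) : (H : ℝ) ≤ Real.log ((d : ℝ) ^ H) := by
  have hlog : 1 ≤ Real.log d := by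
    rw [Real.le_log_iff_exp_le (by positivity)]
    have hd' : (3 : ℝ) ≤ d := by exact_mod_cast hd
    linarith [Real.exp_one_lt_d9]
  rw [Real.log_pow]
  nlinarith

lemma le_div_of_le_div_rpow {q α a z k L H : ℝ} {d : ℕ} (hd : 3 ≤ d) (hk : 1 ≤ k) (hα : α ≤ 1)
    (hz : 0 < z) (hH : 0 < H) (hHL : H ≤ L) (ha : 4 / z * L ≤ a)
    (hq : q ≤ α / (4 * d * k ^ (2 / 3 : ℝ) * a)) : q ≤ z / (48 * H) := by
  rw [div_mul_eq_mul_div, div_le_iff₀ hz] at ha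
  have hd' : (3 : ℝ) ≤ d := by exact_mod_cast hd
  have ha0 : 0 < a := pos_of_mul_pos_left (by linarith) hz.le
  have hdr : 3 ≤ d * k ^ (2 / 3 : ℝ) := by
    nlinarith [Real.one_le_rpow hk (by norm_num : (0 : ℝ) ≤ 2 / 3)]
  calc q ≤ α / (4 * d * k ^ (2 / 3 : ℝ) * a) := hq
    _ ≤ 1 / (4 * d * k ^ (2 / 3 : ℝ) * a) := by gcongr
    _ ≤ z / (48 * H) := by
        rw [div_le_div_iff₀ (by positivity) (by positivity)]
        calc 1 * (48 * H) = 4 * 3 * (4 * H) := by ring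
          _ ≤ 4 * (d * k ^ (2 / 3 : ℝ)) * (a * z) := by gcongr 4 * ?_ * ?_; linarith
          _ = z * (4 * d * k ^ (2 / 3 : ℝ) * a) := by ring

lemma window_bounds_of_abs_sub_le {ζ z k m p H T : ℝ} (hzζ : z ≤ ζ) (hz1 : z ≤ 1) (hz : 0 < z) (hk : 0 ≤ k)
    (hH : 0 < H) (hp0 : 0 ≤ p) (hp : p ≤ z / (48 * H)) (hT : z * k / (2 * H) ≤ T + 1)
    (hm : |m - k| ≤ z * k / 2) :
    ((1 - ζ) * k ≤ m ∧ m ≤ (1 + ζ) * k) ∧ 6 * m * p ≤ T + 1 := by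
  rw [abs_le] at hm
  refine ⟨⟨by nlinarith, by nlinarith⟩, ?_⟩
  have hstep : 0 ≤ z * k / (2 * H) := by positivity
  calc 6 * m * p ≤ 6 * (3 / 2 * k) * (z / (48 * H)) := by gcongr; nlinarith
    _ = 3 / 8 * (z * k / (2 * H)) := by field_simp; ring
    _ ≤ T + 1 := by linarith

lemma four_mul_mul_pow_le_rpow_neg {n D : ℝ} (hn : 2 ≤ n) {s : ℕ}
    (hs : 5 / 2 * (D + 3) * Real.log n ≤ s) : 4 * n * (3 / 5 : ℝ) ^ s ≤ n ^ (-D) := by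
  have hn0 : 0 < n := by linarith
  have hpow : (3 / 5 : ℝ) ^ s ≤ n ^ (-D) * (n ^ 3)⁻¹ :=
    calc (3 / 5 : ℝ) ^ s ≤ Real.exp (-(2 / 5)) ^ s := by
          gcongr; linarith [Real.add_one_le_exp (-(2 / 5))]
      _ = Real.exp (s * (-(2 / 5))) := (Real.exp_nat_mul _ _).symm
      _ ≤ Real.exp (Real.log n * (-(D + 3))) := Real.exp_le_exp.2 (by linarith)
      _ = n ^ (-D) * (n ^ 3)⁻¹ := by
          rw [← Real.rpow_def_of_pos hn0, neg_add, Real.rpow_add hn0, Real.rpow_neg hn0.le (3 : ℝ)]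
          norm_cast
  have hcube : 4 * n * (n ^ 3)⁻¹ ≤ 1 := by
    have hsq : 4 ≤ n ^ 2 := by nlinarith
    rw [mul_inv_le_iff₀ (by positivity)]
    nlinarith
  calc 4 * n * (3 / 5 : ℝ) ^ s ≤ 4 * n * (n ^ (-D) * (n ^ 3)⁻¹) := by gcongr
    _ = n ^ (-D) * (4 * n * (n ^ 3)⁻¹) := by ring
    _ ≤ n ^ (-D) := mul_le_of_le_one_right (by positivity) hcube

lemma nonRootCount_mul_le_rpow_neg {d H T : ℕ} {D : ℝ} (hd : 3 ≤ d) (hH : 1 ≤ H)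
    (hT : 5 / 2 * (D + 3) * Real.log ((d : ℝ) ^ H) ≤ T + 1) :
    (nonRootCount d H : ℝ) * (2 * (3 / 5 : ℝ) ^ (T + 1)) ≤ ((d : ℝ) ^ H) ^ (-D) := by
  have hN : (nonRootCount d H : ℝ) + 2 ≤ 2 * (d : ℝ) ^ H := by
    exact_mod_cast nonRootCount_add_two_le (by omega) H
  have hn : (3 : ℝ) ≤ (d : ℝ) ^ H := by
    have hd' : (3 : ℝ) ≤ d := by exact_mod_cast hd
    linarith [le_self_pow₀ (by linarith : (1 : ℝ) ≤ d) (by omega : H ≠ 0)]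
  calc (nonRootCount d H : ℝ) * (2 * (3 / 5 : ℝ) ^ (T + 1))
      ≤ 2 * (d : ℝ) ^ H * (2 * (3 / 5 : ℝ) ^ (T + 1)) := by gcongr; linarith
    _ = 4 * (d : ℝ) ^ H * (3 / 5 : ℝ) ^ (T + 1) := by ring
    _ ≤ ((d : ℝ) ^ H) ^ (-D) := four_mul_mul_pow_le_rpow_neg (by linarith) (by push_cast; linarith)

lemma mul_log_le_div {z k D L H : ℝ} (hz : 0 < z) (hD : 0 ≤ D + 3) (hL : 1 ≤ L) (hH : 0 < H)
    (hHL : H ≤ L) (hk : 5 * (D + 3) / z * L ^ 3 ≤ k) : 5 / 2 * (D + 3) * L ≤ z * k / (2 * H) := by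
  rw [div_mul_eq_mul_div, div_le_iff₀ hz] at hk
  rw [le_div_iff₀ (by positivity)]
  have hLH : L * H ≤ L ^ 3 :=
    calc L * H ≤ L ^ 2 := by nlinarith
      _ ≤ L ^ 3 := pow_le_pow_right₀ hL (by norm_num)
  nlinarith [mul_le_mul_of_nonneg_left hLH hD]

/-- A root sequence of length k evolves down a d-ary tree of height H
(n = d^H leaves), each site independently inserted-next-to/deleted with total
probability p_i + p_d ≤ α/(4·d·k^{2/3}·a), a ≥ C·log n. For any ζ > 0 (and any
polynomial degree D) there is C' > 0 such that if k ≥ C'·log³n, then with probability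
at least 1 - n^{-D} every node's sequence length lies in [(1-ζ)k, (1+ζ)k]. -/
theorem stmt18 (ζ D : ℝ) (hζ : 0 < ζ) (hD : 0 < D) :
    ∃ C' : ℝ, 0 < C' ∧ ∃ C : ℝ, 0 < C ∧
      ∀ (d H k : ℕ) (a α pins pdel : ℝ), 3 ≤ d → 1 ≤ H →
        C * Real.log ((d : ℝ) ^ H) ≤ a →
        0 < α → α ≤ 1 → 0 ≤ pins → 0 ≤ pdel →
        pins + pdel ≤ α / (4 * d * (k : ℝ) ^ ((2:ℝ)/3) * a) →
        C' * (Real.log ((d : ℝ) ^ H)) ^ 3 ≤ (k : ℝ) →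
        ((allGood pins pdel
            (fun m => decide ((1 - ζ) * k ≤ (m : ℝ) ∧ (m : ℝ) ≤ (1 + ζ) * k)) d H k)
            true).toReal
          ≥ 1 - ((d : ℝ) ^ H) ^ (-D) := by
  set z := min ζ 1
  have hz : 0 < z := lt_min hζ one_pos
  refine ⟨5 * (D + 3) / z, by positivity, 4 / z, by positivity, ?_⟩
  intro d H k a α pins pdel hd hH ha _ hα hpins hpdel hrate hk
  have hH0 : (0 : ℝ) < H := by exact_mod_cast hH
  have hHL : (H : ℝ) ≤ Real.log ((d : ℝ) ^ H) := natCast_le_log_pow hd H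
  have hL : 1 ≤ Real.log ((d : ℝ) ^ H) := by linarith [show (1 : ℝ) ≤ H by exact_mod_cast hH]
  have hk1 : (1 : ℝ) ≤ k := by
    have : (0 : ℝ) < k := lt_of_lt_of_le (mul_pos (by positivity) (by positivity)) hk
    exact_mod_cast Nat.cast_pos.1 this
  have hp := le_div_of_le_div_rpow hd hk1 hα hz hH0 hHL ha hrate
  set T := ⌊z * k / (2 * H)⌋₊
  have hT : z * k / (2 * H) < T + 1 := Nat.lt_floor_add_one _
  have hHT : 2 * H * T ≤ z * k := (le_div_iff₀' (by positivity)).1 (Nat.floor_le (by positivity))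
  have hfail := allGood_apply_false_le hpins hpdel (d := d) (R := z * k / 2)
    (fun m hm => by
      obtain ⟨hgood, hm⟩ := window_bounds_of_abs_sub_le (min_le_left ζ 1) (min_le_right ζ 1) hz k.cast_nonneg hH0
        (by positivity) hp hT.le hm
      exact ⟨decide_eq_true hgood, hm⟩) H k (by simp; linarith)
  apply PMF.one_sub_le_toReal_apply_true
  calc _ ≤ (nonRootCount d H : ℝ) * (2 * (3 / 5 : ℝ) ^ (T + 1)) := by
        simpa using ENNReal.toReal_mono (by finiteness) hfail
    _ ≤ _ := nonRootCount_mul_le_rpow_neg hd hH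
        (by linarith [mul_log_le_div hz (by linarith) hL hH0 hHL hk])
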